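/- The generating function of m-labeled unranked trees that contain a fixed m-labeled unranked tree u of size p as a subtree is C(z) = (z^{p+1} + √(1 − 4mz + 2z^{p+1} + z^{2p+2}) − √(1 − 4mz))/(2z), as an identity of formal power series. -/

import Mathlib

inductive UTree (σ : Type) : Type where
  | node : σ → List (UTree σ) → UTree σ

namespace UTree
variable {σ : Type}

noncomputable instance : DecidableEq (UTree σ) := Classical.decEq _

def children : UTree σ → List (UTree σ)
  | node _ cs => cs

def subs : UTree σ → List (UTree σ)
  | node a cs => node a cs :: (cs.attach.map (fun ⟨c, _⟩ => subs c)).flatten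

def sibs : UTree σ → List (List (UTree σ))
  | node _ cs => cs.tails.filter (fun l => !l.isEmpty)
      ++ (cs.attach.map (fun ⟨c, _⟩ => sibs c)).flatten

def sibseqs (t : UTree σ) : List (List (UTree σ)) := [t] :: sibs t

def edges : UTree σ → ℕ
  | node _ cs => cs.length + (cs.attach.map (fun ⟨c, _⟩ => edges c)).sum

def rootDeg : UTree σ → ℕ
  | node _ cs => cs.length

def nodes : UTree σ → ℕ
  | node _ cs => 1 + (cs.attach.map (fun ⟨c, _⟩ => nodes c)).sum

end UTree

/-!
Let `T`, `A` and `B` count all trees, the trees avoiding `u`, and the trees in which no child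
of the root contains `u`. Detaching the first child of the root gives `T = m + z T²` and
`B = m + z A B`. A tree that contains `u` while no child of its root does is `u` itself, so
`B = A + z^p`, and `A` satisfies the quadratic `A = m + z A² + z^{p+1} A − z^p`. Completing the
squares, `S = 1 − z^{p+1} − 2zA` and `S0 = 1 − 2zT` are the two square roots, and the trees
containing `u` are counted by `T − A`.
-/

open PowerSeries

section CountingSeries

open Finset.HasAntidiagonal

variable {α β : Type*}

noncomputable def countingSeries (size : α → ℕ) (P : α → Prop) : PowerSeries ℚ :=
  mk fun n => Nat.card {a // size a = n ∧ P a}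

@[simp] lemma coeff_countingSeries (size : α → ℕ) (P : α → Prop) (n : ℕ) :
    coeff n (countingSeries size P) = Nat.card {a // size a = n ∧ P a} :=
  coeff_mk _ _

lemma finite_sizeFiber {size : α → ℕ} (hsize : ∀ n, {a | size a = n}.Finite)
    (P : α → Prop) (n : ℕ) : Finite {a // size a = n ∧ P a} :=
  ((hsize n).subset fun _ h => h.1).to_subtype

lemma countingSeries_add_countingSeries_not {size : α → ℕ}
    (hsize : ∀ n, {a | size a = n}.Finite) (P Q : α → Prop) :
    countingSeries size (fun a => P a ∧ Q a) + countingSeries size (fun a => P a ∧ ¬Q a) =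
      countingSeries size P := by
  classical
  ext n
  have := finite_sizeFiber hsize
  rw [map_add, coeff_countingSeries, coeff_countingSeries, coeff_countingSeries,
    ← Nat.cast_add, ← Nat.card_sum]
  congr 1
  refine Nat.card_congr ((Equiv.sumCongr ?_ ?_).trans (Equiv.sumCompl fun a => Q a.1)) <;>
    exact ((Equiv.subtypeSubtypeEquivSubtypeInter _ _).trans
      (Equiv.subtypeEquivRight fun _ => and_assoc)).symm

lemma countingSeries_eq_X_pow (size : α → ℕ) (a : α) :
    countingSeries size (· = a) = X ^ size a := by
  ext n
  rw [coeff_countingSeries, coeff_X_pow]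
  split_ifs with h
  · subst h
    have : Unique {b // size b = size a ∧ b = a} :=
      ⟨⟨a, rfl, rfl⟩, fun b => Subtype.ext b.2.2⟩
    simp
  · have : IsEmpty {b // size b = n ∧ b = a} := ⟨fun b => h (b.2.2 ▸ b.2.1.symm)⟩
    simp

lemma countingSeries_mul {size₁ : α → ℕ} {size₂ : β → ℕ}
    (h₁ : ∀ n, {a | size₁ a = n}.Finite) (h₂ : ∀ n, {b | size₂ b = n}.Finite)
    (P : α → Prop) (Q : β → Prop) :
    countingSeries size₁ P * countingSeries size₂ Q =
      countingSeries (fun x : α × β => size₁ x.1 + size₂ x.2) (fun x => P x.1 ∧ Q x.2) := by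
  ext n
  have := finite_sizeFiber h₁
  have := finite_sizeFiber h₂
  let e : {x : α × β // size₁ x.1 + size₂ x.2 = n ∧ P x.1 ∧ Q x.2} ≃
      Σ ij : antidiagonal n, {a // size₁ a = ij.1.1 ∧ P a} × {b // size₂ b = ij.1.2 ∧ Q b} :=
    { toFun := fun x => ⟨⟨(size₁ x.1.1, size₂ x.1.2), mem_antidiagonal.2 x.2.1⟩,
        ⟨x.1.1, rfl, x.2.2.1⟩, ⟨x.1.2, rfl, x.2.2.2⟩⟩
      invFun := fun y => ⟨(y.2.1, y.2.2), by
        rw [y.2.1.2.1, y.2.2.2.1]; exact mem_antidiagonal.1 y.1.2, y.2.1.2.2, y.2.2.2.2⟩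
      left_inv := fun x => rfl
      right_inv := by
        rintro ⟨⟨⟨i, j⟩, hij⟩, ⟨a, ha, hPa⟩, ⟨b, hb, hQb⟩⟩
        obtain rfl : size₁ a = i := ha
        obtain rfl : size₂ b = j := hb
        rfl }
  rw [coeff_mul, coeff_countingSeries, Nat.card_congr e, Nat.card_sigma, Nat.cast_sum,
    ← Finset.sum_coe_sort]
  simp [Nat.card_prod]

end CountingSeries

namespace UTree

variable {σ : Type}

@[simp] lemma edges_node (a : σ) (cs : List (UTree σ)) :
    edges (node a cs) = cs.length + (cs.map edges).sum := by
  simp [edges]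

@[simp] lemma subs_node (a : σ) (cs : List (UTree σ)) :
    subs (node a cs) = node a cs :: (cs.map subs).flatten := by
  simp [subs]

lemma mem_subs_node {s : UTree σ} {a : σ} {cs : List (UTree σ)} :
    s ∈ subs (node a cs) ↔ s = node a cs ∨ ∃ c ∈ cs, s ∈ subs c := by
  simp

lemma edges_lt_of_mem_children {c : UTree σ} {cs : List (UTree σ)} (h : c ∈ cs) (a : σ) :
    edges c < edges (node a cs) := by
  have := List.le_sum_of_mem (List.mem_map_of_mem (f := edges) h)
  have := List.length_pos_of_mem h
  rw [edges_node]
  omega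

lemma edges_le_of_mem_subs {s : UTree σ} : ∀ {t : UTree σ}, s ∈ subs t → edges s ≤ edges t
  | node a cs, h => by
    obtain rfl | ⟨c, hc, hs⟩ := mem_subs_node.1 h
    · exact le_rfl
    · have := edges_lt_of_mem_children hc a
      exact (edges_le_of_mem_subs hs).trans this.le
termination_by t => edges t
decreasing_by exact edges_lt_of_mem_children hc a

lemma finite_edges_lt [Finite σ] (n : ℕ) : {t : UTree σ | edges t < n}.Finite := by
  induction n with
  | zero => simp
  | succ n ih =>
    have : Finite {t : UTree σ // edges t < n} := ih.to_subtype
    refine ((Set.finite_univ.prod (List.finite_length_le _ n)).image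
      fun x : σ × List {t : UTree σ // edges t < n} => node x.1 (x.2.map Subtype.val)).subset ?_
    rintro ⟨a, cs⟩ ht
    have hlen : cs.length ≤ n := by
      have := Nat.lt_succ_iff.1 ht
      rw [edges_node] at this
      omega
    refine ⟨(a, cs.attach.map fun c => ⟨c.1, ?_⟩), ⟨trivial, by simpa using hlen⟩, by simp⟩
    exact (edges_lt_of_mem_children c.2 a).trans_le (Nat.lt_succ_iff.1 ht)

lemma finite_edges_eq [Finite σ] (n : ℕ) : {t : UTree σ | edges t = n}.Finite :=
  (finite_edges_lt (n + 1)).subset fun _ h => Nat.lt_succ_of_le (le_of_eq h)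

def graft : UTree σ → UTree σ → UTree σ
  | c, node a cs => node a (c :: cs)

@[simp] lemma edges_graft (c t : UTree σ) : edges (graft c t) = edges c + edges t + 1 := by
  cases t
  simp [graft]
  ring

@[simp] lemma children_graft (c t : UTree σ) : children (graft c t) = c :: children t := by
  cases t
  rfl

lemma graft_injective2 : Function.Injective2 (graft : UTree σ → UTree σ → UTree σ) := by
  rintro c c' ⟨a, cs⟩ ⟨a', cs'⟩ h
  simp only [graft, node.injEq, List.cons.injEq] at h
  obtain ⟨rfl, rfl, rfl⟩ := h
  exact ⟨rfl, rfl⟩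

lemma exists_graft_eq_of_edges_ne_zero {t : UTree σ} (ht : edges t ≠ 0) :
    ∃ c t', graft c t' = t := by
  obtain ⟨a, _ | ⟨c, cs⟩⟩ := t
  · simp at ht
  · exact ⟨c, node a cs, rfl⟩

lemma exists_eq_node_nil_of_edges_eq_zero {t : UTree σ} (ht : edges t = 0) :
    ∃ a, node a [] = t := by
  obtain ⟨a, _ | ⟨c, cs⟩⟩ := t
  · exact ⟨a, rfl⟩
  · simp at ht

lemma countingSeries_edges_eq_of_graft [Finite σ] {P Q : UTree σ → Prop}
    (hleaf : ∀ a, Q (node a [])) (hgraft : ∀ c t, Q (graft c t) ↔ P c ∧ Q t) :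
    countingSeries edges Q =
      C (Nat.card σ : ℚ) + X * (countingSeries edges P * countingSeries edges Q) := by
  ext n
  cases n with
  | zero =>
    simp only [coeff_countingSeries, map_add, coeff_zero_C, coeff_zero_X_mul, add_zero]
    refine congrArg _ (Nat.card_eq_of_bijective
      (fun a => ⟨node a [], by simp, hleaf a⟩) ⟨?_, ?_⟩).symm
    · intro a b h
      simpa using h
    · rintro ⟨t, ht, -⟩
      obtain ⟨a, rfl⟩ := exists_eq_node_nil_of_edges_eq_zero ht
      exact ⟨a, rfl⟩
  | succ n =>
    rw [map_add, coeff_C, if_neg n.succ_ne_zero, coeff_succ_X_mul, zero_add,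
      countingSeries_mul finite_edges_eq finite_edges_eq, coeff_countingSeries,
      coeff_countingSeries]
    refine congrArg _ (Nat.card_eq_of_bijective
      (fun x => ⟨graft x.1.1 x.1.2, by simp [x.2.1], (hgraft _ _).2 x.2.2⟩) ⟨?_, ?_⟩).symm
    · intro x y h
      obtain ⟨hc, ht⟩ := graft_injective2 (Subtype.ext_iff.1 h)
      exact Subtype.ext (Prod.ext hc ht)
    · rintro ⟨t, ht, hQ⟩
      obtain ⟨c, t', rfl⟩ := exists_graft_eq_of_edges_ne_zero (ht.trans_ne n.succ_ne_zero)
      simp only [edges_graft, Nat.add_right_cancel_iff] at ht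
      exact ⟨⟨(c, t'), ht, (hgraft c t').1 hQ⟩, rfl⟩

def ChildrenAvoid (u t : UTree σ) : Prop :=
  ∀ c ∈ children t, u ∉ subs c

lemma childrenAvoid_node_nil (u : UTree σ) (a : σ) : ChildrenAvoid u (node a []) := by
  simp [ChildrenAvoid, children]

lemma childrenAvoid_graft {u : UTree σ} (c t : UTree σ) :
    ChildrenAvoid u (graft c t) ↔ u ∉ subs c ∧ ChildrenAvoid u t := by
  simp [ChildrenAvoid]

lemma childrenAvoid_of_notMem_subs {u t : UTree σ} (h : u ∉ subs t) : ChildrenAvoid u t := by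
  obtain ⟨a, cs⟩ := t
  exact fun c hc hu => h (mem_subs_node.2 (Or.inr ⟨c, hc, hu⟩))

lemma childrenAvoid_and_mem_subs_iff {u t : UTree σ} :
    ChildrenAvoid u t ∧ u ∈ subs t ↔ t = u := by
  constructor
  · obtain ⟨a, cs⟩ := t
    rintro ⟨havoid, hu⟩
    obtain rfl | ⟨c, hc, hu⟩ := mem_subs_node.1 hu
    · rfl
    · exact absurd hu (havoid c hc)
  · rintro rfl
    obtain ⟨a, cs⟩ := t
    refine ⟨fun c hc hu => ?_, mem_subs_node.2 (Or.inl rfl)⟩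
    exact (edges_le_of_mem_subs hu).not_gt (edges_lt_of_mem_children hc a)

end UTree

open UTree

/-- Generating function of `m`-labeled unranked trees containing a fixed tree `u` of
size `p`: `C(z) = (z^{p+1} + √(1 − 4mz + 2z^{p+1} + z^{2p+2}) − √(1 − 4mz))/(2z)`,
as an identity of formal power series (the square roots being the unique power series
with constant coefficient 1 squaring to the respective radicands). -/
theorem gf_unranked_containing (m p : ℕ) (u : UTree (Fin m)) (hu : UTree.edges u = p) :
    ∃ S S0 : PowerSeries ℚ,
      S ^ 2 = 1 - 4 * C (m : ℚ) * X + 2 * X ^ (p + 1) + X ^ (2 * p + 2) ∧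
      constantCoeff S = 1 ∧
      S0 ^ 2 = 1 - 4 * C (m : ℚ) * X ∧
      constantCoeff S0 = 1 ∧
      2 * X *
          (mk fun n =>
            (Nat.card {t : UTree (Fin m) // UTree.edges t = n ∧ u ∈ UTree.subs t} : ℚ)) =
        X ^ (p + 1) + S - S0 := by
  set T := countingSeries edges fun _ : UTree (Fin m) => True
  set A := countingSeries edges (u ∉ subs ·)
  set B := countingSeries edges (ChildrenAvoid u)
  have hT : T = C (m : ℚ) + X * (T * T) := by
    simpa using
      countingSeries_edges_eq_of_graft (σ := Fin m) (P := fun _ => True) (by simp) (by simp)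
  have hB : B = C (m : ℚ) + X * (A * B) := by
    simpa using countingSeries_edges_eq_of_graft (childrenAvoid_node_nil u) childrenAvoid_graft
  have hBA : B = A + X ^ p := by
    have := countingSeries_add_countingSeries_not finite_edges_eq (ChildrenAvoid u) (u ∈ subs ·)
    simp only [childrenAvoid_and_mem_subs_iff, countingSeries_eq_X_pow, hu,
      and_iff_right_of_imp childrenAvoid_of_notMem_subs] at this
    exact this.symm.trans (add_comm _ _)
  have hTA : countingSeries edges (u ∈ subs ·) + A = T := by
    simpa using countingSeries_add_countingSeries_not finite_edges_eq (fun _ => True) (u ∈ subs ·)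
  refine ⟨1 - X ^ (p + 1) - 2 * X * A, 1 - 2 * X * T, ?_, by simp, ?_, by simp, ?_⟩
  · rw [hBA] at hB
    linear_combination (-4 * X) * hB
  · linear_combination (-4 * X) * hT
  · change 2 * X * countingSeries edges (u ∈ subs ·) = _
    linear_combination (2 * X) * hTA
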